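/- arXiv:math/0604100 — 4 statements merged into one kernel-verified Lean document; each statement's English description precedes it below -/
import Mathlib

section
/- Let k be a field, r ≥ 2 an integer, and a_1, …, a_{r−1} ∈ k, and let u_i := a_1^{r−i}·a_i + a_{r−1}^{r−i}·a_{r−i} for 1 ≤ i ≤ r−1 be the dihedral invariants. Let ε ∈ k satisfy ε^r = 1 and let δ be a positive integer. Then for every 1 ≤ i ≤ r−1 the dihedral invariants are unchanged under the substitution a_j ↦ ε^{δ·j}·a_j (for all j), and also unchanged under the substitution a_j ↦ a_{r−j} (for all j). That is, u_i(ε^{δ·1}a_1, …, ε^{δ(r−1)}a_{r−1}) = u_i(a_1,…,a_{r−1}) and u_i(a_{r−1}, a_{r−2}, …, a_1) = u_i(a_1,…,a_{r−1}). -/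
/-- The dihedral invariants
`u_i = a_1^(r-i) * a_i + a_(r-1)^(r-i) * a_(r-i)` (for `1 ≤ i ≤ r-1`) are unchanged under
the substitution `a_j ↦ ε^(δj) * a_j` (where `ε^r = 1`) and under the reversal
`a_j ↦ a_(r-j)`. -/
theorem dihedral_invariants_invariant {k : Type*} [Field k] (r : ℕ) (hr : 2 ≤ r)
    (δ : ℕ) (hδ : 0 < δ) (a : ℕ → k) (ε : k) (hε : ε ^ r = 1)
    (u : (ℕ → k) → ℕ → k)
    (hu : ∀ (b : ℕ → k) (i : ℕ),
      u b i = b 1 ^ (r - i) * b i + b (r - 1) ^ (r - i) * b (r - i)) :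
    ∀ i : ℕ, 1 ≤ i → i ≤ r - 1 →
      u (fun j => ε ^ (δ * j) * a j) i = u a i ∧
      u (fun j => a (r - j)) i = u a i := by
  intro i hi1 hi2
  have hr1 : 1 ≤ r := le_trans one_le_two hr
  have hir : i ≤ r := hi2.trans (Nat.sub_le r 1)
  have hkey : ∀ m : ℕ, ε ^ (r * m) = 1 := fun m => by rw [pow_mul, hε, one_pow]
  constructor
  · rw [hu, hu]
    have e1 : (ε ^ (δ * 1)) ^ (r - i) = ε ^ (δ * (r - i)) := by
      rw [← pow_mul, mul_one]
    have hA : ε ^ (δ * (r - i)) * ε ^ (δ * i) = 1 := by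
      rw [← pow_add, ← Nat.mul_add, Nat.sub_add_cancel hir, mul_comm δ r, hkey]
    have hB : (ε ^ (δ * (r - 1))) ^ (r - i) * ε ^ (δ * (r - i)) = 1 := by
      obtain ⟨s, rfl⟩ : ∃ s, r = s + 1 := ⟨r - 1, (Nat.sub_add_cancel hr1).symm⟩
      rw [← pow_mul, ← pow_add]
      have he : δ * (s + 1 - 1) * (s + 1 - i) + δ * (s + 1 - i)
          = (s + 1) * (δ * (s + 1 - i)) := by
        simp only [Nat.add_sub_cancel]
        ring
      rw [he, hkey]
    rw [mul_pow, mul_pow, e1]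
    linear_combination (a 1 ^ (r - i) * a i) * hA
      + (a (r - 1) ^ (r - i) * a (r - i)) * hB
  · rw [hu, hu]
    simp only [Nat.sub_sub_self hr1, Nat.sub_sub_self hir]
    ring
end

section
/- Let k be a field of characteristic ≠ 2, r ≥ 3 an integer, and K = k(a_1, …, a_{r−1}) the rational function field in r−1 independent indeterminates over k. Let η ∈ k be a primitive r-th root of unity, and let σ1 and σ2 be the k-algebra automorphisms of K determined by σ1(a_i) = η^i·a_i and σ2(a_i) = a_{r−i} for 1 ≤ i ≤ r−1. Let G ≤ Aut_k(K) be the subgroup generated by σ1 and σ2, and let u_i := a_1^{r−i}·a_i + a_{r−1}^{r−i}·a_{r−i} for 1 ≤ i ≤ r−1. Then the fixed field K^G equals the intermediate field k(u_1, …, u_{r−1}) generated over k by the dihedral invariants. -/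
/-!
The invariants `u_i` are fixed by the rotation `σ1` (in each summand the powers of `η` multiply to
a power of `η ^ r`) and by the reflection `σ2` (which swaps the two summands), so
`F := k(u_1, …, u_{r-1}) ≤ K^G`. Conversely `K = F(a_1)`, because `a_{r-1} = u_{r-1} / (2 a_1)`
and `(a_1^r - a_{r-1}^r) a_i = a_1^i u_i - a_{r-1}^{r-i} u_{r-i}`; as `a_1^r` is a root of
`X^2 - u_1 X + (u_{r-1} / 2)^r`, this gives `[K : F] ≤ 2r`. Finally `σ1` has order `r` and
`σ2 ∉ ⟨σ1⟩`, so `|G| ≥ 2r`, and Artin's theorem `[K : K^G] = |G|` forces `F = K^G`.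
-/

open Module IntermediateField

theorem Subgroup.two_mul_orderOf_le_card {M : Type*} [Group M] {H : Subgroup M} [Finite H]
    {x y : M} (hx : x ∈ H) (hy : y ∈ H) (hyx : y ∉ Subgroup.zpowers x) :
    2 * orderOf x ≤ Nat.card H := by
  have hle : zpowers x ≤ H := zpowers_le.mpr hx
  obtain ⟨m, hm⟩ := card_dvd_of_le hle
  rw [Nat.card_zpowers] at hm
  have hm0 : m ≠ 0 := by
    rintro rfl
    exact Nat.card_pos.ne' (hm.trans (mul_zero _))
  have hm1 : m ≠ 1 := by
    rintro rfl
    refine hyx ((eq_of_le_of_card_ge hle ?_).symm ▸ hy)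
    rw [hm, Nat.card_zpowers, mul_one]
  rw [hm, mul_comm 2]
  exact Nat.mul_le_mul_left _ (by omega)

namespace IntermediateField

variable {k K : Type*} [Field k] [Field K] [Algebra k K]

theorem adjoin_le_fixedField_closure {S : Set K} {T : Set (K ≃ₐ[k] K)}
    (h : ∀ σ ∈ T, ∀ s ∈ S, σ s = s) : adjoin k S ≤ fixedField (Subgroup.closure T) := by
  refine adjoin_le_iff.mpr fun s hs ⟨σ, hσ⟩ => ?_
  have hT : Subgroup.closure T ≤ MulAction.stabilizer (K ≃ₐ[k] K) s :=
    (Subgroup.closure_le _).mpr fun τ hτ => h τ hτ s hs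
  exact hT hσ

theorem finite_of_le_fixedField {G : Subgroup (K ≃ₐ[k] K)} {F : IntermediateField k K}
    [FiniteDimensional F K] (h : F ≤ fixedField G) : Finite G :=
  have : Finite (fixingSubgroup F) := .of_equiv _ (fixingSubgroupEquiv F).toEquiv.symm
  .of_injective _ (Subgroup.inclusion_injective ((le_iff_le G F).mp h))

theorem eq_fixedField_of_finrank_le_card {G : Subgroup (K ≃ₐ[k] K)} [Finite G]
    {F : IntermediateField k K} [FiniteDimensional F K] (h : F ≤ fixedField G)
    (hcard : finrank F K ≤ Nat.card G) : F = fixedField G := by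
  have : Fintype G := .ofFinite G
  refine eq_of_le_of_finrank_le' h ?_
  rwa [show finrank (fixedField G) K = Fintype.card G from FixedPoints.finrank_eq_card G K,
    ← Nat.card_eq_fintype_card]

variable {F : Type*} [Field F] [Algebra F K]

open Polynomial in
theorem finrank_adjoin_simple_le_natDegree {x : K} {p : F[X]} (hp : p ≠ 0)
    (hx : aeval x p = 0) : finrank F F⟮x⟯ ≤ p.natDegree := by
  rw [adjoin.finrank (isAlgebraic_iff_isIntegral.mp ⟨p, hp, hx⟩)]
  exact natDegree_le_natDegree (minpoly.degree_le_of_ne_zero F x hp hx)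

theorem finiteDimensional_of_adjoin_simple_eq_top {x : K} (hx : IsIntegral F x)
    (htop : F⟮x⟯ = ⊤) : FiniteDimensional F K :=
  have := adjoin.finiteDimensional hx
  ((equivOfEq htop).trans topEquiv).toLinearEquiv.finiteDimensional

end IntermediateField

theorem AlgEquiv.pow_apply_of_apply_eq_algebraMap_mul {k K : Type*} [CommSemiring k]
    [Semiring K] [Algebra k K] {σ : K ≃ₐ[k] K} {x : K} {c : k}
    (h : σ x = algebraMap k K c * x) (n : ℕ) : (σ ^ n) x = algebraMap k K (c ^ n) * x := by
  induction n with
  | zero => simp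
  | succ n ih =>
    rw [pow_succ', mul_apply, ih, map_mul, commutes, h, ← mul_assoc, ← map_mul, ← pow_succ]

theorem MvPolynomial.X_pow_ne_C_mul_X_pow {R σ : Type*} [CommSemiring R] [Nontrivial R]
    {i j : σ} (hij : i ≠ j) {m : ℕ} (hm : m ≠ 0) (c : R) (n : ℕ) :
    X i ^ m ≠ C c * X j ^ n := by
  classical
  intro h
  have := congrArg (coeff (Finsupp.single i m)) h
  rw [coeff_X_pow, coeff_C_mul, coeff_X_pow, if_pos rfl, if_neg, mul_zero] at this
  · exact one_ne_zero this
  · intro hs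
    rcases (Finsupp.single_eq_single_iff _ _ _ _).mp hs with ⟨hji, -⟩ | ⟨-, hm0⟩
    exacts [hij hji.symm, hm hm0]

namespace IsFractionRing

open MvPolynomial

theorem algebraMap_X_ne_zero {R K ι : Type*} [CommRing R] [Nontrivial R] [CommRing K]
    [Algebra (MvPolynomial ι R) K] [IsFractionRing (MvPolynomial ι R) K] (i : ι) :
    algebraMap (MvPolynomial ι R) K (X i) ≠ 0 :=
  (map_ne_zero_iff _ (IsFractionRing.injective (MvPolynomial ι R) K)).mpr (X_ne_zero i)

variable {k K ι : Type*} [Field k] [Field K] [Algebra (MvPolynomial ι k) K]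
  [IsFractionRing (MvPolynomial ι k) K] [Algebra k K] [IsScalarTower k (MvPolynomial ι k) K]

theorem algHom_ext_of_X {L : Type*} [Semiring L] [Algebra k L] {f g : K →ₐ[k] L}
    (h : ∀ i, f (algebraMap (MvPolynomial ι k) K (X i)) =
      g (algebraMap (MvPolynomial ι k) K (X i))) : f = g :=
  IsLocalization.algHom_ext (nonZeroDivisors _) (MvPolynomial.algHom_ext h)

theorem eq_top_of_algebraMap_X_mem {E : IntermediateField k K}
    (h : ∀ i, algebraMap (MvPolynomial ι k) K (X i) ∈ E) : E = ⊤ := by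
  have hpoly (p : MvPolynomial ι k) : algebraMap (MvPolynomial ι k) K p ∈ E := by
    induction p using MvPolynomial.induction_on with
    | C c =>
      rw [← algebraMap_eq, ← IsScalarTower.algebraMap_apply]
      exact E.algebraMap_mem c
    | add p q hp hq => rw [map_add]; exact add_mem hp hq
    | mul_X p i hp => rw [map_mul]; exact mul_mem hp (h i)
  refine eq_top_iff.mpr fun x _ => ?_
  obtain ⟨p, q, -, rfl⟩ := div_surjective (A := MvPolynomial ι k) x
  exact div_mem (hpoly p) (hpoly q)

theorem algebraMap_X_pow_ne_mul_X_pow {i j : ι} (hij : i ≠ j) {m : ℕ} (hm : m ≠ 0) (c : k)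
    (n : ℕ) : algebraMap (MvPolynomial ι k) K (X i) ^ m ≠
      algebraMap k K c * algebraMap (MvPolynomial ι k) K (X j) ^ n := by
  rw [IsScalarTower.algebraMap_apply k (MvPolynomial ι k) K, ← map_pow, ← map_pow, ← map_mul,
    (IsFractionRing.injective (MvPolynomial ι k) K).ne_iff, algebraMap_eq]
  exact X_pow_ne_C_mul_X_pow hij hm c n

theorem pow_eq_one_iff_of_apply_X {σ : K ≃ₐ[k] K} {w : ι → k}
    (hσ : ∀ i, σ (algebraMap (MvPolynomial ι k) K (X i)) =
      algebraMap k K (w i) * algebraMap (MvPolynomial ι k) K (X i)) (n : ℕ) :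
    σ ^ n = 1 ↔ ∀ i, w i ^ n = 1 := by
  refine ⟨fun h i => ?_, fun h => AlgEquiv.coe_toAlgHom_injective <|
    algHom_ext_of_X (ι := ι) fun i => ?_⟩
  · have hi := (σ.pow_apply_of_apply_eq_algebraMap_mul (hσ i) n).symm
    rw [h, AlgEquiv.one_apply, mul_eq_right₀ (algebraMap_X_ne_zero i)] at hi
    exact (algebraMap k K).injective (hi.trans (map_one _).symm)
  · simp [σ.pow_apply_of_apply_eq_algebraMap_mul (hσ i) n, h i]

theorem orderOf_eq_of_apply_X {σ : K ≃ₐ[k] K} {η : k} {r : ℕ} (hη : IsPrimitiveRoot η r)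
    (e : ι → ℕ) {i₀ : ι} (he : e i₀ = 1)
    (hσ : ∀ i, σ (algebraMap (MvPolynomial ι k) K (X i)) =
      algebraMap k K (η ^ e i) * algebraMap (MvPolynomial ι k) K (X i)) :
    orderOf σ = r := by
  refine (orderOf_eq_orderOf_iff.mpr fun n => ?_).trans hη.eq_orderOf.symm
  rw [pow_eq_one_iff_of_apply_X hσ]
  refine ⟨fun h => by simpa [he] using h i₀, fun h i => ?_⟩
  rw [← pow_mul, mul_comm, pow_mul, h, one_pow]

theorem notMem_zpowers_of_apply_X {σ τ : K ≃ₐ[k] K} {w : ι → k}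
    (hσ : ∀ i, σ (algebraMap (MvPolynomial ι k) K (X i)) =
      algebraMap k K (w i) * algebraMap (MvPolynomial ι k) K (X i))
    (hσfin : IsOfFinOrder σ) {i j : ι} (hij : i ≠ j)
    (hτ : τ (algebraMap (MvPolynomial ι k) K (X i)) = algebraMap (MvPolynomial ι k) K (X j)) :
    τ ∉ Subgroup.zpowers σ := by
  rintro hτσ
  obtain ⟨n, rfl⟩ := hσfin.mem_powers_iff_mem_zpowers.mpr hτσ
  rw [σ.pow_apply_of_apply_eq_algebraMap_mul (hσ i)] at hτ
  exact algebraMap_X_pow_ne_mul_X_pow (K := K) hij.symm one_ne_zero (w i ^ n) 1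
    (by rw [pow_one, pow_one, hτ])

end IsFractionRing

section DihedralInvariant

variable {R : Type*} [CommRing R]

def dihedralInvariant (r : ℕ) (a : ℕ → R) (i : ℕ) : R :=
  a 1 ^ (r - i) * a i + a (r - 1) ^ (r - i) * a (r - i)

variable {r : ℕ} {a : ℕ → R}

theorem dihedralInvariant_one (hr : 1 ≤ r) :
    dihedralInvariant r a 1 = a 1 ^ r + a (r - 1) ^ r := by
  rw [dihedralInvariant, ← pow_succ, ← pow_succ, Nat.sub_add_cancel hr]

theorem dihedralInvariant_sub_one (hr : 1 ≤ r) :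
    dihedralInvariant r a (r - 1) = 2 * (a 1 * a (r - 1)) := by
  rw [dihedralInvariant, Nat.sub_sub_self hr]
  ring

theorem sub_mul_eq_dihedralInvariant {i : ℕ} (hi : i ≤ r) :
    (a 1 ^ r - a (r - 1) ^ r) * a i =
      a 1 ^ i * dihedralInvariant r a i - a (r - 1) ^ (r - i) * dihedralInvariant r a (r - i) := by
  have h1 : a 1 ^ i * a 1 ^ (r - i) = a 1 ^ r := by rw [← pow_add, Nat.add_sub_cancel' hi]
  have h2 : a (r - 1) ^ i * a (r - 1) ^ (r - i) = a (r - 1) ^ r := by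
    rw [← pow_add, Nat.add_sub_cancel' hi]
  rw [dihedralInvariant, dihedralInvariant, Nat.sub_sub_self hi]
  linear_combination a i * h2 - a i * h1

theorem map_dihedralInvariant_of_rotation {F : Type*} [FunLike F R R] [RingHomClass F R R]
    {f : F} {ζ : R} (hζ : ζ ^ r = 1)
    (hf : ∀ i, 1 ≤ i → i ≤ r - 1 → f (a i) = ζ ^ i * a i) {i : ℕ} (hi : 1 ≤ i)
    (hir : i ≤ r - 1) : f (dihedralInvariant r a i) = dihedralInvariant r a i := by
  have hr : 1 ≤ r := by omega
  rw [dihedralInvariant, map_add, map_mul, map_mul, map_pow, map_pow, hf 1 le_rfl (by omega),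
    hf i hi hir, hf (r - 1) (by omega) le_rfl, hf (r - i) (by omega) (by omega)]
  have h1 : (ζ ^ 1) ^ (r - i) * ζ ^ i = 1 := by
    rw [pow_one, ← pow_add, Nat.sub_add_cancel (by omega), hζ]
  have h2 : (ζ ^ (r - 1)) ^ (r - i) * ζ ^ (r - i) = 1 := by
    rw [← mul_pow, ← pow_succ, Nat.sub_add_cancel hr, hζ, one_pow]
  linear_combination (a 1 ^ (r - i) * a i) * h1 + (a (r - 1) ^ (r - i) * a (r - i)) * h2

theorem map_dihedralInvariant_of_reflection {F : Type*} [FunLike F R R] [RingHomClass F R R]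
    {f : F} (hf : ∀ i, 1 ≤ i → i ≤ r - 1 → f (a i) = a (r - i)) {i : ℕ} (hi : 1 ≤ i)
    (hir : i ≤ r - 1) : f (dihedralInvariant r a i) = dihedralInvariant r a i := by
  rw [dihedralInvariant, map_add, map_mul, map_mul, map_pow, map_pow, hf 1 le_rfl (by omega),
    hf i hi hir, hf (r - 1) (by omega) le_rfl, hf (r - i) (by omega) (by omega),
    Nat.sub_sub_self (by omega : 1 ≤ r), Nat.sub_sub_self (by omega : i ≤ r)]
  ring

end DihedralInvariant

def dihedralInvariantField (k : Type*) {K : Type*} [Field k] [Field K] [Algebra k K] (r : ℕ)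
    (a : ℕ → K) : IntermediateField k K :=
  adjoin k {x : K | ∃ i : ℕ, 1 ≤ i ∧ i ≤ r - 1 ∧ x = dihedralInvariant r a i}

section DihedralInvariantField

variable {k K : Type*} [Field k] [Field K] [Algebra k K] {r : ℕ} {a : ℕ → K}

theorem mem_of_dihedralInvariant_mem {S : Type*} [SetLike S K] [SubfieldClass S K] {E : S}
    (h2 : (2 : K) ≠ 0) (ha1 : a 1 ≠ 0) (hΔ : a 1 ^ r ≠ a (r - 1) ^ r) (ha1E : a 1 ∈ E)
    (hu : ∀ i, 1 ≤ i → i ≤ r - 1 → dihedralInvariant r a i ∈ E) {i : ℕ} (hi : 1 ≤ i)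
    (hir : i ≤ r - 1) : a i ∈ E := by
  have har : a (r - 1) ∈ E := by
    have h : a (r - 1) = dihedralInvariant r a (r - 1) / (2 * a 1) := by
      rw [dihedralInvariant_sub_one (by omega), eq_div_iff (mul_ne_zero h2 ha1)]
      ring
    rw [h]
    exact div_mem (hu _ (by omega) le_rfl) (mul_mem (ofNat_mem E 2) ha1E)
  rw [← mul_div_cancel_left₀ (a i) (sub_ne_zero.mpr hΔ),
    sub_mul_eq_dihedralInvariant (by omega)]
  exact div_mem (sub_mem (mul_mem (pow_mem ha1E i) (hu i hi hir))
      (mul_mem (pow_mem har _) (hu _ (by omega) (by omega))))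
    (sub_mem (pow_mem ha1E r) (pow_mem har r))

open Polynomial in
theorem exists_monic_aeval_eq_zero_of_dihedralInvariant_mem {F : IntermediateField k K}
    (hr : 1 ≤ r) (h2 : (2 : K) ≠ 0)
    (hu1 : dihedralInvariant r a 1 ∈ F) (hur : dihedralInvariant r a (r - 1) ∈ F) :
    ∃ p : F[X], p.Monic ∧ p.natDegree = 2 * r ∧ aeval (a 1) p = 0 := by
  have hprod : a 1 * a (r - 1) ∈ F := by
    rw [← mul_div_cancel_left₀ (a 1 * a (r - 1)) h2, ← dihedralInvariant_sub_one hr]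
    exact div_mem hur (ofNat_mem F 2)
  refine ⟨(X ^ 2 - C (⟨_, hu1⟩ : F) * X + C (⟨_, pow_mem hprod r⟩ : F)).comp (X ^ r),
    Monic.comp (by monicity!) (monic_X_pow r) (by rw [natDegree_X_pow]; omega), ?_, ?_⟩
  · rw [natDegree_comp, natDegree_X_pow]
    congr 1
    compute_degree!
  · simp only [aeval_comp, map_add, map_sub, map_mul, map_pow, aeval_X, aeval_C,
      IntermediateField.algebraMap_apply, dihedralInvariant_one hr]
    ring

theorem dihedralInvariant_mem_dihedralInvariantField {i : ℕ} (hi : 1 ≤ i) (hir : i ≤ r - 1) :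
    dihedralInvariant r a i ∈ dihedralInvariantField k r a :=
  subset_adjoin _ _ ⟨i, hi, hir, rfl⟩

theorem dihedralInvariantField_le_fixedField {η : k} (hη : η ^ r = 1) {σ1 σ2 : K ≃ₐ[k] K}
    (hσ1 : ∀ i : ℕ, 1 ≤ i → i ≤ r - 1 → σ1 (a i) = algebraMap k K (η ^ i) * a i)
    (hσ2 : ∀ i : ℕ, 1 ≤ i → i ≤ r - 1 → σ2 (a i) = a (r - i)) :
    dihedralInvariantField k r a ≤ fixedField (Subgroup.closure {σ1, σ2}) := by
  refine adjoin_le_fixedField_closure ?_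
  rintro σ (rfl | rfl) _ ⟨i, hi, hir, rfl⟩
  · refine map_dihedralInvariant_of_rotation (ζ := algebraMap k K η)
      (by rw [← map_pow, hη, map_one]) (fun i hi hir => ?_) hi hir
    rw [hσ1 i hi hir, map_pow]
  · exact map_dihedralInvariant_of_reflection hσ2 hi hir

end DihedralInvariantField

section GenericPoint

open MvPolynomial

theorem exists_ne_algebraMap_X_eq {k K : Type*} [CommSemiring k] [Semiring K] {r : ℕ}
    [Algebra (MvPolynomial (Fin (r - 1)) k) K] {a : ℕ → K} (hr : 3 ≤ r)
    (ha : ∀ i : Fin (r - 1), a (i.1 + 1) = algebraMap (MvPolynomial (Fin (r - 1)) k) K (X i)) :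
    ∃ i j : Fin (r - 1), i ≠ j ∧ a 1 = algebraMap (MvPolynomial (Fin (r - 1)) k) K (X i) ∧
      a (r - 1) = algebraMap (MvPolynomial (Fin (r - 1)) k) K (X j) := by
  refine ⟨⟨0, by omega⟩, ⟨r - 2, by omega⟩, by simp; omega, ha ⟨0, by omega⟩, ?_⟩
  simpa [show r - 2 + 1 = r - 1 by omega] using ha ⟨r - 2, by omega⟩

variable {k K : Type*} [Field k] [Field K] {r : ℕ} [Algebra (MvPolynomial (Fin (r - 1)) k) K]
  [IsFractionRing (MvPolynomial (Fin (r - 1)) k) K] [Algebra k K]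
  [IsScalarTower k (MvPolynomial (Fin (r - 1)) k) K] {a : ℕ → K}

theorem dihedralInvariantField_adjoin_simple_eq_top (hr : 3 ≤ r) (h2 : (2 : K) ≠ 0)
    (ha : ∀ i : Fin (r - 1), a (i.1 + 1) = algebraMap (MvPolynomial (Fin (r - 1)) k) K (X i)) :
    (dihedralInvariantField k r a)⟮a 1⟯ = ⊤ := by
  set F := dihedralInvariantField k r a
  obtain ⟨i, j, hij, ha1, har⟩ := exists_ne_algebraMap_X_eq hr ha
  have ha1ne : a 1 ≠ 0 := ha1 ▸ IsFractionRing.algebraMap_X_ne_zero i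
  have hΔ : a 1 ^ r ≠ a (r - 1) ^ r := by
    simpa [ha1, har] using
      IsFractionRing.algebraMap_X_pow_ne_mul_X_pow (k := k) (K := K) hij (by omega : r ≠ 0) 1 r
  rw [← restrictScalars_eq_top_iff (K := k)]
  refine IsFractionRing.eq_top_of_algebraMap_X_mem (ι := Fin (r - 1)) fun l => ?_
  rw [← ha l]
  exact mem_of_dihedralInvariant_mem h2 ha1ne hΔ (mem_adjoin_simple_self F (a 1))
    (fun i hi hir => F⟮a 1⟯.algebraMap_mem
      (⟨_, dihedralInvariant_mem_dihedralInvariantField hi hir⟩ : F)) (by omega) (by omega)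

theorem two_mul_le_card_closure (hr : 3 ≤ r)
    (ha : ∀ i : Fin (r - 1), a (i.1 + 1) = algebraMap (MvPolynomial (Fin (r - 1)) k) K (X i))
    {η : k} (hη : IsPrimitiveRoot η r) {σ1 σ2 : K ≃ₐ[k] K}
    (hσ1 : ∀ i : ℕ, 1 ≤ i → i ≤ r - 1 → σ1 (a i) = algebraMap k K (η ^ i) * a i)
    (hσ2 : σ2 (a 1) = a (r - 1)) [Finite (Subgroup.closure {σ1, σ2})] :
    2 * r ≤ Nat.card (Subgroup.closure {σ1, σ2}) := by
  obtain ⟨i, j, hij, ha1, har⟩ := exists_ne_algebraMap_X_eq hr ha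
  have hσ1X (l : Fin (r - 1)) : σ1 (algebraMap (MvPolynomial (Fin (r - 1)) k) K (X l)) =
      algebraMap k K (η ^ (l.1 + 1)) * algebraMap (MvPolynomial (Fin (r - 1)) k) K (X l) := by
    rw [← ha l]
    exact hσ1 _ (by omega) (by omega)
  have hord : orderOf σ1 = r :=
    IsFractionRing.orderOf_eq_of_apply_X hη (fun l : Fin (r - 1) => l.1 + 1)
      (i₀ := ⟨0, by omega⟩) rfl hσ1X
  rw [← hord]
  exact Subgroup.two_mul_orderOf_le_card (Subgroup.subset_closure (Set.mem_insert σ1 _))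
    (Subgroup.subset_closure (Set.mem_insert_of_mem σ1 (Set.mem_singleton σ2)))
    (IsFractionRing.notMem_zpowers_of_apply_X hσ1X (orderOf_pos_iff.mp (by omega)) hij
      (by rw [← ha1, ← har]; exact hσ2))

end GenericPoint

/-- Let `k` be a field of characteristic `≠ 2`, `r ≥ 3`, and
`K = k(a_1,…,a_(r-1))` the rational function field in `r-1` indeterminates. Let `η ∈ k` be a
primitive `r`-th root of unity, and `σ1, σ2` the `k`-automorphisms of `K` with
`σ1(a_i) = η^i·a_i`, `σ2(a_i) = a_(r-i)`. Let `G = ⟨σ1, σ2⟩` and let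
`u_i = a_1^(r-i)·a_i + a_(r-1)^(r-i)·a_(r-i)` be the dihedral invariants. Then the fixed
field `K^G` equals `k(u_1,…,u_(r-1))`. -/
theorem fixedField_eq_adjoin_dihedral_invariants {k K : Type*} [Field k] [Field K]
    (hchar : ringChar k ≠ 2) (r : ℕ) (hr : 3 ≤ r)
    [Algebra (MvPolynomial (Fin (r - 1)) k) K]
    [IsFractionRing (MvPolynomial (Fin (r - 1)) k) K]
    [Algebra k K] [IsScalarTower k (MvPolynomial (Fin (r - 1)) k) K]
    (a : ℕ → K)
    (ha : ∀ i : Fin (r - 1),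
      a (i.1 + 1) = algebraMap (MvPolynomial (Fin (r - 1)) k) K (MvPolynomial.X i))
    (η : k) (hη : IsPrimitiveRoot η r)
    (σ1 σ2 : K ≃ₐ[k] K)
    (hσ1 : ∀ i : ℕ, 1 ≤ i → i ≤ r - 1 → σ1 (a i) = algebraMap k K (η ^ i) * a i)
    (hσ2 : ∀ i : ℕ, 1 ≤ i → i ≤ r - 1 → σ2 (a i) = a (r - i))
    (u : ℕ → K)
    (hu : ∀ i : ℕ, u i = a 1 ^ (r - i) * a i + a (r - 1) ^ (r - i) * a (r - i)) :
    IntermediateField.fixedField (Subgroup.closure ({σ1, σ2} : Set (K ≃ₐ[k] K))) =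
      IntermediateField.adjoin k {x : K | ∃ i : ℕ, 1 ≤ i ∧ i ≤ r - 1 ∧ x = u i} := by
  obtain rfl : u = dihedralInvariant r a := funext hu
  set F := dihedralInvariantField k r a
  show fixedField _ = F
  have h2 : (2 : K) ≠ 0 := by
    rw [← map_ofNat (algebraMap k K) 2]
    exact (_root_.map_ne_zero _).mpr (Ring.two_ne_zero hchar)
  have hFG : F ≤ fixedField (Subgroup.closure {σ1, σ2}) :=
    dihedralInvariantField_le_fixedField hη.pow_eq_one hσ1 hσ2
  have htop : F⟮a 1⟯ = ⊤ := dihedralInvariantField_adjoin_simple_eq_top hr h2 ha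
  obtain ⟨p, hp, hpdeg, hpa⟩ := exists_monic_aeval_eq_zero_of_dihedralInvariant_mem (F := F)
    (by omega) h2 (dihedralInvariant_mem_dihedralInvariantField le_rfl (by omega))
    (dihedralInvariant_mem_dihedralInvariantField (by omega) le_rfl)
  have : FiniteDimensional F K := finiteDimensional_of_adjoin_simple_eq_top ⟨p, hp, hpa⟩ htop
  have : Finite (Subgroup.closure {σ1, σ2}) := finite_of_le_fixedField hFG
  refine (eq_fixedField_of_finrank_le_card hFG ?_).symm
  calc finrank F K = finrank F F⟮a 1⟯ := by rw [htop, finrank_top']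
    _ ≤ 2 * r := hpdeg ▸ finrank_adjoin_simple_le_natDegree hp.ne_zero hpa
    _ ≤ _ := two_mul_le_card_closure hr ha hη hσ1 (hσ2 1 le_rfl (by omega))
end

section
/- Let k be a field, let δ ≥ 1 and r ≥ 2 be integers, and let a_0, a_1, …, a_r ∈ k satisfy a_r = 1, a_0^2 = 1, and a_i = a_0·a_{r−i} for all 0 ≤ i ≤ r. Let λ ∈ k satisfy λ^{δr} = a_0 and define the normalized coefficients a_i' := λ^{δi}·a_i / a_0. Set u_1 := (a_1')^r + (a_{r−1}')^r and u_{r−1} := 2·a_1'·a_{r−1}'. Then 2^{r−2}·u_1^2 = u_{r−1}^r. -/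
/-!
Since `2 ^ (r - 2) * ((x ^ r + y ^ r) ^ 2 - 4 * (x * y) ^ r) = 2 ^ (r - 2) * (x ^ r - y ^ r) ^ 2`,
the relation holds as soon as `(a_1') ^ r = (a_(r-1)') ^ r`. Writing `ε = a_0` and `L = λ ^ δ`,
so that `ε ^ 2 = 1` and `L ^ r = ε`, the symmetry `a_i = ε * a_(r-i)` makes both
`(a_i') ^ r` and `(a_(r-i)') ^ r` equal to `ε ^ i * a_(r-i) ^ r`.
-/

theorem two_pow_mul_add_pow_sq_eq_of_pow_eq {R : Type*} [CommRing R] {r : ℕ} (hr : 2 ≤ r)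
    {x y : R} (h : x ^ r = y ^ r) : 2 ^ (r - 2) * (x ^ r + y ^ r) ^ 2 = (2 * x * y) ^ r := by
  obtain ⟨m, rfl⟩ : ∃ m, r = m + 2 := ⟨r - 2, by omega⟩
  rw [mul_pow, mul_pow, h, Nat.add_sub_cancel]
  ring

theorem normalized_coeff_pow_eq {k : Type*} [Field k] {r i : ℕ} (hi : i ≤ r) {a a' : ℕ → k}
    {ε L : k} (hε : ε ^ 2 = 1) (hsym : a i = ε * a (r - i)) (hL : L ^ r = ε)
    (ha' : ∀ j, a' j = L ^ j * a j / ε) : a' i ^ r = a' (r - i) ^ r := by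
  obtain ⟨j, rfl⟩ : ∃ j, r = i + j := ⟨r - i, by omega⟩
  have hε0 : ε ≠ 0 := by rintro rfl; simp at hε
  rw [Nat.add_sub_cancel_left] at hsym ⊢
  have hεε : ε ^ i * ε ^ (i + j) = ε ^ j := by
    rw [← pow_add, show i + (i + j) = j + 2 * i by ring, pow_add, pow_mul, hε, one_pow, mul_one]
  have hcancel : L ^ i * (ε * a j) / ε = L ^ i * a j := by field_simp
  rw [ha', ha', hsym, hcancel, div_pow, mul_pow, mul_pow, ← pow_mul, ← pow_mul, mul_comm i,
    mul_comm j, pow_mul, pow_mul, hL, eq_div_iff (pow_ne_zero _ hε0)]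
  linear_combination a j ^ (i + j) * hεε

theorem dihedral_locus_relation_general {k : Type*} [Field k] (δ r : ℕ) (hr : 2 ≤ r)
    (a : ℕ → k) (ha0 : a 0 ^ 2 = 1)
    (hsym : ∀ i : ℕ, i ≤ r → a i = a 0 * a (r - i))
    (lam : k) (hlam : lam ^ (δ * r) = a 0)
    (a' : ℕ → k) (ha' : ∀ i : ℕ, a' i = lam ^ (δ * i) * a i / a 0)
    (u1 ur1 : k) (hu1 : u1 = a' 1 ^ r + a' (r - 1) ^ r)
    (hur1 : ur1 = 2 * a' 1 * a' (r - 1)) :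
    2 ^ (r - 2) * u1 ^ 2 = ur1 ^ r := by
  have hL : (lam ^ δ) ^ r = a 0 := by rw [← pow_mul, hlam]
  have ha'L : ∀ i, a' i = (lam ^ δ) ^ i * a i / a 0 := fun i => by rw [ha', pow_mul]
  have hpow : a' 1 ^ r = a' (r - 1) ^ r :=
    normalized_coeff_pow_eq (by omega) ha0 (hsym 1 (by omega)) hL ha'L
  rw [hu1, hur1]
  exact two_pow_mul_add_pow_sq_eq_of_pow_eq hr hpow

/-- If `a_r = 1`, `a_0² = 1`, `a_i = a_0·a_(r-i)` for all `0 ≤ i ≤ r`,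
and `λ^(δr) = a_0`, then with the normalized coefficients `a_i' := λ^(δi)·a_i / a_0` the
dihedral invariants `u_1 = (a_1')^r + (a_(r-1)')^r` and `u_(r-1) = 2·a_1'·a_(r-1)'`
satisfy `2^(r-2)·u_1² = u_(r-1)^r`. -/
theorem dihedral_locus_relation {k : Type*} [Field k] (δ r : ℕ) (hδ : 1 ≤ δ) (hr : 2 ≤ r)
    (a : ℕ → k) (har : a r = 1) (ha0 : a 0 ^ 2 = 1)
    (hsym : ∀ i : ℕ, i ≤ r → a i = a 0 * a (r - i))
    (lam : k) (hlam : lam ^ (δ * r) = a 0)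
    (a' : ℕ → k) (ha' : ∀ i : ℕ, a' i = lam ^ (δ * i) * a i / a 0)
    (u1 ur1 : k) (hu1 : u1 = a' 1 ^ r + a' (r - 1) ^ r)
    (hur1 : ur1 = 2 * a' 1 * a' (r - 1)) :
    2 ^ (r - 2) * u1 ^ 2 = ur1 ^ r :=
  dihedral_locus_relation_general δ r hr a ha0 hsym lam hlam a' ha' u1 ur1 hu1 hur1
end

section
/- Let k be a field of characteristic ≠ 2, r ≥ 3 an integer, and a_1, …, a_{r−1} ∈ k with a_1 ≠ 0 and a_{r−i} = a_i for all 1 ≤ i ≤ r−1. Let u_i := a_1^{r−i}·a_i + a_{r−1}^{r−i}·a_{r−i} for 1 ≤ i ≤ r−1 (so u_1 = 2a_1^r ≠ 0). Let c ∈ k satisfy c^r = u_1/2, and define A_i := (u_{r−i}/u_1)·c^{r−i} for 1 ≤ i ≤ r−1. Then the dihedral invariants of (A_1, …, A_{r−1}) coincide with those of (a_1, …, a_{r−1}): for every 1 ≤ i ≤ r−1, A_1^{r−i}·A_i + A_{r−1}^{r−i}·A_{r−i} = u_i. -/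
/-- Let `char k ≠ 2`, `r ≥ 3`, `a_1 ≠ 0`, and suppose the coefficients
are symmetric: `a_(r-i) = a_i` for `1 ≤ i ≤ r-1`. With dihedral invariants
`u_i = a_1^(r-i)·a_i + a_(r-1)^(r-i)·a_(r-i)` (so `u_1 = 2a_1^r ≠ 0`), let `c` satisfy
`c^r = u_1/2` and set `A_i := (u_(r-i)/u_1)·c^(r-i)`. Then the dihedral invariants of
`(A_1,…,A_(r-1))` coincide with those of `(a_1,…,a_(r-1))`:
`A_1^(r-i)·A_i + A_(r-1)^(r-i)·A_(r-i) = u_i` for all `1 ≤ i ≤ r-1`. -/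
theorem field_of_moduli_model_invariants {k : Type*} [Field k] (h2 : (2 : k) ≠ 0)
    (r : ℕ) (hr : 3 ≤ r)
    (a : ℕ → k) (ha1 : a 1 ≠ 0)
    (hsym : ∀ i : ℕ, 1 ≤ i → i ≤ r - 1 → a (r - i) = a i)
    (u : ℕ → k)
    (hu : ∀ i : ℕ, u i = a 1 ^ (r - i) * a i + a (r - 1) ^ (r - i) * a (r - i))
    (c : k) (hc : c ^ r = u 1 / 2)
    (A : ℕ → k) (hA : ∀ i : ℕ, A i = (u (r - i) / u 1) * c ^ (r - i)) :
    ∀ i : ℕ, 1 ≤ i → i ≤ r - 1 →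
      A 1 ^ (r - i) * A i + A (r - 1) ^ (r - i) * A (r - i) = u i := by
  intro i hi1 hir
  have ha1r : a (r - 1) = a 1 := hsym 1 le_rfl (by omega)
  have hu1 : u 1 = 2 * a 1 ^ r := by
    rw [hu 1, ha1r]
    have h : a 1 ^ (r - 1) * a 1 = a 1 ^ r := by
      rw [← pow_succ]; congr 1; omega
    rw [h]; ring
  have hu1ne : u 1 ≠ 0 := by
    rw [hu1]; exact mul_ne_zero h2 (pow_ne_zero _ ha1)
  have hcr : c ^ r = a 1 ^ r := by
    rw [hc, hu1]
    field_simp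
  have hugen : ∀ m, 1 ≤ m → m ≤ r - 1 → u m = 2 * (a 1 ^ (r - m) * a m) := by
    intro m hm1 hm2
    rw [hu m, ha1r, hsym m hm1 hm2]; ring
  have hAgen : ∀ m, 1 ≤ m → m ≤ r - 1 → A m = a m * c ^ (r - m) / a 1 ^ (r - m) := by
    intro m hm1 hm2
    have h1 : r - (r - m) = m := by omega
    have hsymm : a (r - m) = a m := by
      have h := hsym (r - m) (by omega) (by omega)
      rw [h1] at h
      exact h.symm
    rw [hA m, hugen (r - m) (by omega) (by omega), h1, hu1, hsymm]
    have hpow : a 1 ^ r = a 1 ^ m * a 1 ^ (r - m) := by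
      rw [← pow_add]; congr 1; omega
    rw [hpow]
    have hne : a 1 ^ m ≠ 0 := pow_ne_zero _ ha1
    have hne' : a 1 ^ (r - m) ≠ 0 := pow_ne_zero _ ha1
    field_simp
  set j := r - i with hjdef
  have hij : i + j = r := by omega
  have hj1 : 1 ≤ j := by omega
  have hjr : j ≤ r - 1 := by omega
  have haij : a j = a i := by
    have h := hsym j hj1 hjr
    rw [show r - j = i by omega] at h
    exact h.symm
  have hA1 : A 1 = a 1 * c ^ (r - 1) / a 1 ^ (r - 1) := hAgen 1 le_rfl (by omega)
  have hAr1 : A (r - 1) = c := by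
    rw [hAgen (r - 1) (by omega) le_rfl, show r - (r - 1) = 1 by omega, ha1r,
      pow_one, pow_one, mul_comm, mul_div_assoc, div_self ha1, mul_one]
  have hAi : A i = a i * c ^ j / a 1 ^ j := hAgen i hi1 hir
  have hAj : A j = a i * c ^ i / a 1 ^ i := by
    rw [hAgen j hj1 hjr, show r - j = i by omega, haij]
  -- key power identity
  have hcj : c ^ ((r - 1) * j) * c ^ j = a 1 ^ ((r - 1) * j) * a 1 ^ j := by
    have h1 : (r - 1) * j + j = r * j := by
      have : r - 1 + 1 = r := by omega
      calc (r - 1) * j + j = ((r - 1) + 1) * j := by ring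
        _ = r * j := by rw [this]
    rw [← pow_add, ← pow_add, h1, pow_mul, pow_mul, hcr]
  have hci : c ^ j * c ^ i = a 1 ^ j * a 1 ^ i := by
    rw [← pow_add, ← pow_add, show j + i = r by omega, hcr]
  have t1 : A 1 ^ j * A i = a 1 ^ j * a i := by
    rw [hA1, hAi, div_pow, mul_pow, ← pow_mul, ← pow_mul, div_mul_div_comm]
    have hnum : a 1 ^ j * c ^ ((r - 1) * j) * (a i * c ^ j)
        = a 1 ^ j * a i * (c ^ ((r - 1) * j) * c ^ j) := by ring
    rw [hnum, hcj]
    have hd1 : a 1 ^ ((r - 1) * j) ≠ 0 := pow_ne_zero _ ha1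
    have hd2 : a 1 ^ j ≠ 0 := pow_ne_zero _ ha1
    field_simp
  have t2 : A (r - 1) ^ j * A j = a 1 ^ j * a i := by
    rw [hAr1, hAj]
    have hnum : c ^ j * (a i * c ^ i / a 1 ^ i)
        = a i * (c ^ j * c ^ i) / a 1 ^ i := by ring
    rw [hnum, hci]
    have hd : a 1 ^ i ≠ 0 := pow_ne_zero _ ha1
    field_simp
  rw [t1, t2, hugen i hi1 hir]
  ring
end
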